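/- arXiv:2602.07255 — 2 statements merged into one kernel-verified Lean document; each statement's English description precedes it below -/
import Mathlib

section
/- Let λ > 0, c₀ > 0, φ₀ > 0 and φ₁ ∈ ℝ with φ₀ + φ₁ c₀ > 0, set m := min(φ₀, φ₀ + φ₁ c₀), and define the drift b(a,p) := − (λ φ₁ c₀ e^{−λ a} / (φ₀ + φ₁ c₀ e^{−λ a})) · p for a ≥ 0, p ∈ ℝ. Then for every P > 0 and all a, a' ≥ 0 and p, p' ∈ [−P, P]: |b(a,p) − b(a',p')| ≤ (λ² |φ₁| c₀ φ₀ / m²) · P · |a − a'| + (λ |φ₁| c₀ / m) · |p − p'|. -/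
set_option maxHeartbeats 1000000


/-- Joint Lipschitz-type estimate for the drift
`b(a,p) = -(λ φ₁ c₀ e^{-λ a} / (φ₀ + φ₁ c₀ e^{-λ a})) p` of the McKean–Vlasov SDE:
for every `P > 0`, all `a, a' ≥ 0` and `p, p' ∈ [-P, P]`,
`|b(a,p) - b(a',p')| ≤ (λ² |φ₁| c₀ φ₀ / m²) P |a - a'| + (λ |φ₁| c₀ / m) |p - p'|`,
where `m = min(φ₀, φ₀ + φ₁ c₀)`. -/
theorem drift_joint_lipschitz
    (lam : ℝ) (hlam : 0 < lam) (c₀ : ℝ) (hc₀ : 0 < c₀)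
    (φ₀ : ℝ) (hφ₀ : 0 < φ₀) (φ₁ : ℝ) (hsum : 0 < φ₀ + φ₁ * c₀)
    (m : ℝ) (hm : m = min φ₀ (φ₀ + φ₁ * c₀))
    (b : ℝ → ℝ → ℝ)
    (hb : ∀ a p, b a p = -(lam * φ₁ * c₀ * Real.exp (-lam * a) /
        (φ₀ + φ₁ * c₀ * Real.exp (-lam * a))) * p) :
    ∀ P : ℝ, 0 < P → ∀ a a' : ℝ, 0 ≤ a → 0 ≤ a' →
      ∀ p p' : ℝ, p ∈ Set.Icc (-P) P → p' ∈ Set.Icc (-P) P →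
        |b a p - b a' p'| ≤
          lam ^ 2 * |φ₁| * c₀ * φ₀ / m ^ 2 * P * |a - a'| +
            lam * |φ₁| * c₀ / m * |p - p'| := by
  intro P hP a a' ha ha' p p' hp hp'
  obtain ⟨hp1, hp2⟩ := hp
  obtain ⟨hp1', hp2'⟩ := hp'
  have hm0 : 0 < m := hm ▸ lt_min hφ₀ hsum
  have hml : m ≤ φ₀ := hm ▸ min_le_left _ _
  have hmr : m ≤ φ₀ + φ₁ * c₀ := hm ▸ min_le_right _ _
  set E := Real.exp (-lam * a) with hE
  set E' := Real.exp (-lam * a') with hE'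
  have hE0 : 0 < E := Real.exp_pos _
  have hE0' : 0 < E' := Real.exp_pos _
  have hE1 : E ≤ 1 := Real.exp_le_one_iff.mpr (by nlinarith)
  have hE1' : E' ≤ 1 := Real.exp_le_one_iff.mpr (by nlinarith)
  have hD : m ≤ φ₀ + φ₁ * c₀ * E := by nlinarith
  have hD' : m ≤ φ₀ + φ₁ * c₀ * E' := by nlinarith
  have hD0 : 0 < φ₀ + φ₁ * c₀ * E := lt_of_lt_of_le hm0 hD
  have hD0' : 0 < φ₀ + φ₁ * c₀ * E' := lt_of_lt_of_le hm0 hD'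
  -- Lipschitz bound for the exponential
  have key : ∀ x y : ℝ, 0 ≤ x → x ≤ y →
      Real.exp (-lam * x) - Real.exp (-lam * y) ≤ lam * (y - x) := by
    intro x y hx hxy
    have h1 : Real.exp (-lam * x) ≤ 1 := Real.exp_le_one_iff.mpr (by nlinarith)
    have h2 : Real.exp (-lam * y) = Real.exp (-lam * x) * Real.exp (-lam * (y - x)) := by
      rw [← Real.exp_add]; ring_nf
    have h3 : 1 - lam * (y - x) ≤ Real.exp (-lam * (y - x)) := by
      have := Real.add_one_le_exp (-lam * (y - x)); linarith
    have h4 : Real.exp (-lam * (y - x)) ≤ 1 := Real.exp_le_one_iff.mpr (by nlinarith)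
    have h5 : 0 < Real.exp (-lam * x) := Real.exp_pos _
    nlinarith
  have hEE : |E - E'| ≤ lam * |a - a'| := by
    rcases le_total a a' with h | h
    · have hge : E' ≤ E := Real.exp_le_exp.mpr (by nlinarith)
      rw [abs_of_nonneg (sub_nonneg.mpr hge), abs_of_nonpos (sub_nonpos.mpr h)]
      have := key a a' ha h
      linarith [this, (by ring : lam * -(a - a') = lam * (a' - a))]
    · have hge : E ≤ E' := Real.exp_le_exp.mpr (by nlinarith)
      rw [abs_of_nonpos (sub_nonpos.mpr hge), abs_of_nonneg (sub_nonneg.mpr h)]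
      have := key a' a ha' h
      linarith
  clear_value E E'
  rw [hb, hb, ← hE, ← hE']
  have heq : -(lam * φ₁ * c₀ * E / (φ₀ + φ₁ * c₀ * E)) * p -
      -(lam * φ₁ * c₀ * E' / (φ₀ + φ₁ * c₀ * E')) * p' =
      (-(lam * φ₁ * c₀ * E / (φ₀ + φ₁ * c₀ * E))) * (p - p') +
      (-(lam * φ₁ * c₀ * φ₀ * (E - E') /
        ((φ₀ + φ₁ * c₀ * E) * (φ₀ + φ₁ * c₀ * E')))) * p' := by
    field_simp
    ring
  rw [heq]
  have habs1 : |(-(lam * φ₁ * c₀ * E / (φ₀ + φ₁ * c₀ * E))) * (p - p')| ≤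
      lam * |φ₁| * c₀ / m * |p - p'| := by
    rw [abs_mul, abs_neg, abs_div, abs_mul, abs_mul, abs_mul lam φ₁, abs_of_pos hlam, abs_of_pos hc₀,
      abs_of_pos hE0, abs_of_pos hD0]
    apply mul_le_mul_of_nonneg_right _ (abs_nonneg _)
    have hnum : lam * |φ₁| * c₀ * E ≤ lam * |φ₁| * c₀ := by
      have := mul_le_mul_of_nonneg_left hE1 (show (0:ℝ) ≤ lam * |φ₁| * c₀ by positivity)
      linarith
    exact div_le_div₀ (by positivity) hnum hm0 hD
  have habs2 : |(-(lam * φ₁ * c₀ * φ₀ * (E - E') /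
        ((φ₀ + φ₁ * c₀ * E) * (φ₀ + φ₁ * c₀ * E')))) * p'| ≤
      lam ^ 2 * |φ₁| * c₀ * φ₀ / m ^ 2 * P * |a - a'| := by
    have hp'P : |p'| ≤ P := abs_le.mpr ⟨hp1', hp2'⟩
    rw [abs_mul, abs_neg, abs_div, abs_mul, abs_mul, abs_mul, abs_mul lam φ₁, abs_of_pos hlam,
      abs_of_pos hc₀, abs_of_pos hφ₀, abs_of_pos (mul_pos hD0 hD0')]
    have hnum : lam * |φ₁| * c₀ * φ₀ * |E - E'| ≤
        lam ^ 2 * |φ₁| * c₀ * φ₀ * |a - a'| := by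
      have := mul_le_mul_of_nonneg_left hEE (show (0:ℝ) ≤ lam * |φ₁| * c₀ * φ₀ by positivity)
      nlinarith [this]
    have hden : m ^ 2 ≤ (φ₀ + φ₁ * c₀ * E) * (φ₀ + φ₁ * c₀ * E') := by nlinarith
    have hfrac : lam * |φ₁| * c₀ * φ₀ * |E - E'| /
        ((φ₀ + φ₁ * c₀ * E) * (φ₀ + φ₁ * c₀ * E')) ≤
        lam ^ 2 * |φ₁| * c₀ * φ₀ * |a - a'| / m ^ 2 :=
      div_le_div₀ (by positivity) hnum (by positivity) hden
    calc lam * |φ₁| * c₀ * φ₀ * |E - E'| /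
          ((φ₀ + φ₁ * c₀ * E) * (φ₀ + φ₁ * c₀ * E')) * |p'| ≤
        lam ^ 2 * |φ₁| * c₀ * φ₀ * |a - a'| / m ^ 2 * P := by
          apply mul_le_mul hfrac hp'P (abs_nonneg _) (by positivity)
      _ = lam ^ 2 * |φ₁| * c₀ * φ₀ / m ^ 2 * P * |a - a'| := by ring
  calc |(-(lam * φ₁ * c₀ * E / (φ₀ + φ₁ * c₀ * E))) * (p - p') +
        (-(lam * φ₁ * c₀ * φ₀ * (E - E') /
          ((φ₀ + φ₁ * c₀ * E) * (φ₀ + φ₁ * c₀ * E')))) * p'| ≤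
      |(-(lam * φ₁ * c₀ * E / (φ₀ + φ₁ * c₀ * E))) * (p - p')| +
      |(-(lam * φ₁ * c₀ * φ₀ * (E - E') /
          ((φ₀ + φ₁ * c₀ * E) * (φ₀ + φ₁ * c₀ * E')))) * p'| := abs_add_le _ _
    _ ≤ lam ^ 2 * |φ₁| * c₀ * φ₀ / m ^ 2 * P * |a - a'| +
        lam * |φ₁| * c₀ / m * |p - p'| := by linarith
end

section
/- Let λ > 0, c₀ > 0, T > 0, and let w, w̃ : [0,T] → ℝ be measurable, nonnegative functions with |w(s) − w̃(s)| ≤ ε for all s ∈ [0,T]. Define the Feynman–Kac discount factors D(t) := exp(−λ c₀ ∫₀ᵗ exp(−λ ∫₀ˢ w(r) dr) ds) and D̃(t) := exp(−λ c₀ ∫₀ᵗ exp(−λ ∫₀ˢ w̃(r) dr) ds). Then for every t ∈ [0,T]: |D(t) − D̃(t)| ≤ (λ² c₀ t² / 2) · ε. -/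
open MeasureTheory intervalIntegral

/-- `|e^{-x} - e^{-y}| ≤ |x - y|` for nonnegative `x, y`. -/
lemma abs_exp_neg_sub_exp_neg_le {x y : ℝ} (hx : 0 ≤ x) (hy : 0 ≤ y) :
    |Real.exp (-x) - Real.exp (-y)| ≤ |x - y| := by
  have key : ∀ a b : ℝ, 0 ≤ a → a ≤ b → Real.exp (-a) - Real.exp (-b) ≤ b - a := by
    intro a b ha hab
    have h1 : -(b - a) + 1 ≤ Real.exp (-(b - a)) := Real.add_one_le_exp _
    have h2 : Real.exp (-a) ≤ 1 := Real.exp_le_one_iff.mpr (by linarith)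
    have h3 : Real.exp (-b) = Real.exp (-a) * Real.exp (-(b - a)) := by
      rw [← Real.exp_add]; ring_nf
    have h4 : 0 < Real.exp (-a) := Real.exp_pos _
    nlinarith
  rcases le_total x y with h | h
  · have h1 := key x y hx h
    have h2 : Real.exp (-y) ≤ Real.exp (-x) := Real.exp_le_exp.mpr (by linarith)
    rw [abs_of_nonneg (by linarith), abs_of_nonpos (by linarith)]
    linarith
  · have h1 := key y x hy h
    have h2 : Real.exp (-x) ≤ Real.exp (-y) := Real.exp_le_exp.mpr (by linarith)
    rw [abs_of_nonpos (by linarith), abs_of_nonneg (by linarith)]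
    linarith

/-- Stability of the Feynman–Kac discount factor with respect to the mollified
density: if `w, w̃ ≥ 0` are measurable on `[0,T]` with `|w - w̃| ≤ ε` there, then the
discount factors `D(t) = exp(-λ c₀ ∫₀ᵗ exp(-λ ∫₀ˢ w(r) dr) ds)` and `D̃(t)` satisfy
`|D(t) - D̃(t)| ≤ (λ² c₀ t² / 2) ε` for every `t ∈ [0,T]`. -/
theorem discount_factor_stability
    (lam : ℝ) (hlam : 0 < lam) (c₀ : ℝ) (hc₀ : 0 < c₀) (T : ℝ) (hT : 0 < T)
    (ε : ℝ)
    (w w' : ℝ → ℝ) (hw_meas : Measurable w) (hw'_meas : Measurable w')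
    (hw_nonneg : ∀ s ∈ Set.Icc (0:ℝ) T, 0 ≤ w s)
    (hw'_nonneg : ∀ s ∈ Set.Icc (0:ℝ) T, 0 ≤ w' s)
    (hclose : ∀ s ∈ Set.Icc (0:ℝ) T, |w s - w' s| ≤ ε)
    (D D' : ℝ → ℝ)
    (hD : ∀ t, D t = Real.exp
      (-lam * c₀ * ∫ s in (0:ℝ)..t, Real.exp (-lam * ∫ r in (0:ℝ)..s, w r)))
    (hD' : ∀ t, D' t = Real.exp
      (-lam * c₀ * ∫ s in (0:ℝ)..t, Real.exp (-lam * ∫ r in (0:ℝ)..s, w' r))) :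
    ∀ t ∈ Set.Icc (0:ℝ) T, |D t - D' t| ≤ lam ^ 2 * c₀ * t ^ 2 / 2 * ε := by
  intro t ht
  obtain ⟨ht0, htT⟩ := ht
  have hε : 0 ≤ ε := le_trans (abs_nonneg _) (hclose 0 ⟨le_refl 0, hT.le⟩)
  -- notation for the inner primitives
  set f : ℝ → ℝ := fun s => ∫ r in (0:ℝ)..s, w r with hf_def
  set f' : ℝ → ℝ := fun s => ∫ r in (0:ℝ)..s, w' r with hf'_def
  -- nonnegativity of the primitives
  have hf_nonneg : ∀ s ∈ Set.Icc (0:ℝ) t, 0 ≤ f s := by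
    intro s hs
    exact intervalIntegral.integral_nonneg hs.1
      (fun r hr => hw_nonneg r ⟨hr.1, hr.2.trans (hs.2.trans htT)⟩)
  have hf'_nonneg : ∀ s ∈ Set.Icc (0:ℝ) t, 0 ≤ f' s := by
    intro s hs
    exact intervalIntegral.integral_nonneg hs.1
      (fun r hr => hw'_nonneg r ⟨hr.1, hr.2.trans (hs.2.trans htT)⟩)
  -- the difference w - w' is interval integrable on [0,s] for s ∈ [0,t]
  have hdiff_int : ∀ s ∈ Set.Icc (0:ℝ) t,
      IntervalIntegrable (fun r => w r - w' r) volume 0 s := by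
    intro s hs
    apply (_root_.intervalIntegrable_const (c := ε)).mono_fun
      ((hw_meas.sub hw'_meas).aestronglyMeasurable)
    rw [Set.uIoc_of_le hs.1]
    filter_upwards [ae_restrict_mem measurableSet_Ioc] with r hr
    simp only [Real.norm_eq_abs]
    rw [abs_of_nonneg hε]
    exact hclose r ⟨hr.1.le, hr.2.trans (hs.2.trans htT)⟩
  -- key estimate on the primitives
  have hf_close : ∀ s ∈ Set.Icc (0:ℝ) t, |f s - f' s| ≤ ε * s := by
    intro s hs
    by_cases hint : IntervalIntegrable w volume 0 s
    · have hint' : IntervalIntegrable w' volume 0 s := by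
        have := hint.sub (hdiff_int s hs)
        simpa using this
      have heq : f s - f' s = ∫ r in (0:ℝ)..s, (w r - w' r) :=
        (intervalIntegral.integral_sub hint hint').symm
      rw [heq]
      calc |∫ r in (0:ℝ)..s, (w r - w' r)|
          ≤ ∫ r in (0:ℝ)..s, |w r - w' r| :=
            intervalIntegral.abs_integral_le_integral_abs hs.1
        _ ≤ ∫ r in (0:ℝ)..s, ε := by
            apply intervalIntegral.integral_mono_on hs.1
              (hdiff_int s hs).abs _root_.intervalIntegrable_const
            intro r hr
            exact hclose r ⟨hr.1, hr.2.trans (hs.2.trans htT)⟩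
        _ = ε * s := by simp [mul_comm]
    · have hint' : ¬ IntervalIntegrable w' volume 0 s := by
        intro h
        exact hint (by simpa using h.add (hdiff_int s hs))
      have h1 : f s = 0 := intervalIntegral.integral_undef hint
      have h2 : f' s = 0 := intervalIntegral.integral_undef hint'
      rw [h1, h2]
      simp [mul_nonneg hε hs.1]
  -- measurability of the primitives: they agree with an ENNReal primitive
  have hmono : ∀ (v : ℝ → ℝ), Measurable fun s =>
      (∫⁻ r in Set.Ioc (0:ℝ) s, ENNReal.ofReal (v r)).toReal := by
    intro v
    apply Measurable.ennreal_toReal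
    apply Monotone.measurable
    intro s₁ s₂ h
    exact lintegral_mono_set (Set.Ioc_subset_Ioc_right h)
  have hf_eq : ∀ s ∈ Set.Icc (0:ℝ) T,
      f s = (∫⁻ r in Set.Ioc (0:ℝ) s, ENNReal.ofReal (w r)).toReal := by
    intro s hs
    rw [hf_def]
    simp only
    rw [intervalIntegral.integral_of_le hs.1]
    rw [integral_eq_lintegral_of_nonneg_ae]
    · filter_upwards [ae_restrict_mem measurableSet_Ioc] with r hr
      exact hw_nonneg r ⟨hr.1.le, hr.2.trans hs.2⟩
    · exact hw_meas.aestronglyMeasurable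
  have hf'_eq : ∀ s ∈ Set.Icc (0:ℝ) T,
      f' s = (∫⁻ r in Set.Ioc (0:ℝ) s, ENNReal.ofReal (w' r)).toReal := by
    intro s hs
    rw [hf'_def]
    simp only
    rw [intervalIntegral.integral_of_le hs.1]
    rw [integral_eq_lintegral_of_nonneg_ae]
    · filter_upwards [ae_restrict_mem measurableSet_Ioc] with r hr
      exact hw'_nonneg r ⟨hr.1.le, hr.2.trans hs.2⟩
    · exact hw'_meas.aestronglyMeasurable
  -- interval integrability of g s = exp(-lam * f s) on [0, t]
  have hg_int : ∀ (v : ℝ → ℝ) (hv : ∀ s ∈ Set.Icc (0:ℝ) T,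
        (∫ r in (0:ℝ)..s, v r) = (∫⁻ r in Set.Ioc (0:ℝ) s, ENNReal.ofReal (v r)).toReal),
      IntervalIntegrable (fun s => Real.exp (-lam * ∫ r in (0:ℝ)..s, v r)) volume 0 t := by
    intro v hv
    apply (_root_.intervalIntegrable_const (c := (1:ℝ))).mono_fun
    · apply AEStronglyMeasurable.congr
        (f := fun s => Real.exp (-lam * (∫⁻ r in Set.Ioc (0:ℝ) s, ENNReal.ofReal (v r)).toReal))
      · exact ((measurable_const.mul (hmono v)).exp).aestronglyMeasurable
      · rw [Set.uIoc_of_le ht0]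
        filter_upwards [ae_restrict_mem measurableSet_Ioc] with s hs
        rw [hv s ⟨hs.1.le, hs.2.trans htT⟩]
    · rw [Set.uIoc_of_le ht0]
      filter_upwards [ae_restrict_mem measurableSet_Ioc] with s hs
      simp only [Real.norm_eq_abs, Real.abs_exp, norm_one]
      apply Real.exp_le_one_iff.mpr
      rw [hv s ⟨hs.1.le, hs.2.trans htT⟩]
      have : (0:ℝ) ≤ (∫⁻ r in Set.Ioc (0:ℝ) s, ENNReal.ofReal (v r)).toReal :=
        ENNReal.toReal_nonneg
      nlinarith
  have hgw_int : IntervalIntegrable (fun s => Real.exp (-lam * f s)) volume 0 t := hg_int w hf_eq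
  have hgw'_int : IntervalIntegrable (fun s => Real.exp (-lam * f' s)) volume 0 t :=
    hg_int w' hf'_eq
  -- bound on the difference of the outer integrands
  have hg_close : ∀ s ∈ Set.Icc (0:ℝ) t,
      |Real.exp (-lam * f s) - Real.exp (-lam * f' s)| ≤ lam * ε * s := by
    intro s hs
    have h1 : -lam * f s = -(lam * f s) := by ring
    have h2 : -lam * f' s = -(lam * f' s) := by ring
    rw [h1, h2]
    calc |Real.exp (-(lam * f s)) - Real.exp (-(lam * f' s))|
        ≤ |lam * f s - lam * f' s| :=
          abs_exp_neg_sub_exp_neg_le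
            (mul_nonneg hlam.le (hf_nonneg s hs)) (mul_nonneg hlam.le (hf'_nonneg s hs))
      _ = lam * |f s - f' s| := by rw [← mul_sub, abs_mul, abs_of_pos hlam]
      _ ≤ lam * (ε * s) := by
          exact mul_le_mul_of_nonneg_left (hf_close s hs) hlam.le
      _ = lam * ε * s := by ring
  -- the outer integrals
  set I : ℝ := ∫ s in (0:ℝ)..t, Real.exp (-lam * f s) with hI_def
  set I' : ℝ := ∫ s in (0:ℝ)..t, Real.exp (-lam * f' s) with hI'_def
  have hI_nonneg : 0 ≤ I :=
    intervalIntegral.integral_nonneg ht0 (fun s _ => (Real.exp_pos _).le)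
  have hI'_nonneg : 0 ≤ I' :=
    intervalIntegral.integral_nonneg ht0 (fun s _ => (Real.exp_pos _).le)
  have hI_close : |I - I'| ≤ lam * ε * t ^ 2 / 2 := by
    have heq : I - I' = ∫ s in (0:ℝ)..t,
        (Real.exp (-lam * f s) - Real.exp (-lam * f' s)) :=
      (intervalIntegral.integral_sub hgw_int hgw'_int).symm
    rw [heq]
    calc |∫ s in (0:ℝ)..t, (Real.exp (-lam * f s) - Real.exp (-lam * f' s))|
        ≤ ∫ s in (0:ℝ)..t, |Real.exp (-lam * f s) - Real.exp (-lam * f' s)| :=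
          intervalIntegral.abs_integral_le_integral_abs ht0
      _ ≤ ∫ s in (0:ℝ)..t, lam * ε * s := by
          apply intervalIntegral.integral_mono_on ht0 (hgw_int.sub hgw'_int).abs
          · exact (continuous_const.mul continuous_id).intervalIntegrable 0 t
          · exact hg_close
      _ = lam * ε * t ^ 2 / 2 := by
          rw [intervalIntegral.integral_const_mul, integral_id]
          ring
  -- conclude
  rw [hD t, hD' t]
  have h1 : -lam * c₀ * I = -(lam * c₀ * I) := by ring
  have h2 : -lam * c₀ * I' = -(lam * c₀ * I') := by ring
  rw [h1, h2]
  calc |Real.exp (-(lam * c₀ * I)) - Real.exp (-(lam * c₀ * I'))|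
      ≤ |lam * c₀ * I - lam * c₀ * I'| :=
        abs_exp_neg_sub_exp_neg_le
          (mul_nonneg (mul_nonneg hlam.le hc₀.le) hI_nonneg)
          (mul_nonneg (mul_nonneg hlam.le hc₀.le) hI'_nonneg)
    _ = lam * c₀ * |I - I'| := by
        rw [← mul_sub, abs_mul, abs_of_pos (mul_pos hlam hc₀)]
    _ ≤ lam * c₀ * (lam * ε * t ^ 2 / 2) :=
        mul_le_mul_of_nonneg_left hI_close (mul_nonneg hlam.le hc₀.le)
    _ = lam ^ 2 * c₀ * t ^ 2 / 2 * ε := by ring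
end
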